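/- arXiv:2101.10513 — 6 statements merged into one kernel-verified Lean document; each statement's English description precedes it below -/
import Mathlib

section
/- Let a, b > 0 be real numbers. If m, n, p, q are integers with |m+nτ′| ≤ a and |(pτ−q)/√5| ≤ b, then |exp(−2πi·(m+nτ)·((q−pτ′)/√5)) − 1| ≤ 2πab. In other words, for every x in ⋀([−a,a]) and every y in ⋀⋆([−b,b]) one has |e^{−2πi x y} − 1| ≤ 2πab. -/
noncomputable def tau : ℝ := (1 + Real.sqrt 5) / 2
noncomputable def tau' : ℝ := (1 - Real.sqrt 5) / 2

/-! Writing `x = m + nτ`, `y = (q − pτ′)/√5`, the pairing identity says `x y = k − u v` with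
`k = mp + nq ∈ ℤ`, `u = m + nτ′` and `v = (pτ − q)/√5`. Since `e^{−2πi·}` is `1` on the integers
and `|e^{iθ} − 1| ≤ |θ|`, we get `|e^{−2πi x y} − 1| ≤ 2π |u| |v| ≤ 2πab`. -/

open Complex Real

theorem tau_sub_tau' : tau - tau' = √5 := by
  unfold tau tau'
  ring

theorem pairing_add_pairing (m n p q : ℤ) :
    ((m : ℝ) + n * tau) * ((q - p * tau') / √5) + ((m : ℝ) + n * tau') * ((p * tau - q) / √5)
      = ((m * p + n * q : ℤ) : ℝ) := by
  have h5 : √5 ≠ 0 := by positivity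
  have hτ : tau = tau' + √5 := by linarith [tau_sub_tau']
  rw [hτ]
  field_simp
  push_cast
  ring

theorem norm_exp_neg_two_pi_I_mul_sub_one_le (x : ℝ) (k : ℤ) :
    ‖exp (-2 * π * I * x) - 1‖ ≤ 2 * π * |x - k| := by
  have hperiodic : exp (-2 * π * I * x) = exp (I * ↑(2 * π * (k - x))) := by
    rw [show I * ↑(2 * π * (k - x)) = -2 * π * I * x + k * (2 * π * I) by push_cast; ring,
      Complex.exp_add, exp_int_mul_two_pi_mul_I, mul_one]
  calc ‖exp (-2 * π * I * x) - 1‖ ≤ ‖2 * π * ((k : ℝ) - x)‖ :=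
        hperiodic ▸ norm_exp_I_mul_ofReal_sub_one_le
    _ = 2 * π * |x - k| := by
        rw [Real.norm_eq_abs, abs_mul, abs_sub_comm, abs_of_pos two_pi_pos]

theorem exp_pairing_estimate_general (a b : ℝ)
    (m n p q : ℤ)
    (hx : |(m : ℝ) + n * tau'| ≤ a)
    (hy : |((p : ℝ) * tau - q) / Real.sqrt 5| ≤ b) :
    norm
      (Complex.exp (-2 * Real.pi * Complex.I *
        ((((m : ℝ) + n * tau) * (((q : ℝ) - p * tau') / Real.sqrt 5) : ℝ) : ℂ)) - 1)
      ≤ 2 * Real.pi * a * b := by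
  refine (norm_exp_neg_two_pi_I_mul_sub_one_le _ (m * p + n * q)).trans ?_
  rw [← pairing_add_pairing m n p q, sub_add_cancel_left, abs_neg, abs_mul, ← mul_assoc]
  have ha : 0 ≤ a := (abs_nonneg _).trans hx
  gcongr

/-- If `x = m+nτ ∈ ⋀([−a,a])` (i.e. `|m+nτ′| ≤ a`) and `y = (q−pτ′)/√5 ∈ ⋀⋆([−b,b])`
(i.e. `|(pτ−q)/√5| ≤ b`), then `|e^{−2πi x y} − 1| ≤ 2πab`. -/
theorem exp_pairing_estimate (a b : ℝ) (ha : 0 < a) (hb : 0 < b)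
    (m n p q : ℤ)
    (hx : |(m : ℝ) + n * tau'| ≤ a)
    (hy : |((p : ℝ) * tau - q) / Real.sqrt 5| ≤ b) :
    norm
      (Complex.exp (-2 * Real.pi * Complex.I *
        ((((m : ℝ) + n * tau) * (((q : ℝ) - p * tau') / Real.sqrt 5) : ℝ) : ℂ)) - 1)
      ≤ 2 * Real.pi * a * b :=
  exp_pairing_estimate_general a b m n p q hx hy
end

section
/- Let 0 < a < τ/√5, where τ = (1+√5)/2. Then ⋀⋆((−a,a)) + [0, τ³/(5a)] = ℝ; that is, for every real s there exist integers m, n with (mτ−n)/√5 ∈ (−a,a) and s − (n−mτ′)/√5 ∈ [0, τ³/(5a)]. -/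
open Real Set
open scoped goldenRatio

theorem exists_add_mul_mem_Ioc_and_mem_Ioo {θ θ' : ℝ} (h : θ' < θ) (T : ℝ) :
    ∃ p q : ℤ, (p + q * θ : ℝ) ∈ Ioc (T - 1) T ∧ (p + q * θ' : ℝ) ∈ Ioo (-1) (θ - θ') := by
  have hd : 0 < θ - θ' := sub_pos.2 h
  set q := ⌊T / (θ - θ')⌋
  set p := ⌊T - q * θ⌋
  have hq₁ : q * (θ - θ') ≤ T := (le_div_iff₀ hd).1 (Int.floor_le _)
  have hq₂ : T < (q + 1) * (θ - θ') := (div_lt_iff₀ hd).1 (Int.lt_floor_add_one _)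
  have hp₁ : (p : ℝ) ≤ T - q * θ := Int.floor_le _
  have hp₂ : T - q * θ < p + 1 := Int.lt_floor_add_one _
  exact ⟨p, q, ⟨by linarith, by linarith⟩, by nlinarith, by nlinarith⟩

theorem zpow_eq_fib_sub_one_add_fib_mul {K : Type*} [Field K] {z : K} (hz : z ^ 2 = z + 1)
    (k : ℤ) : z ^ k = Int.fib (k - 1) + Int.fib k * z := by
  have hz₀ : z ≠ 0 := by rintro rfl; simp at hz
  have step (k : ℤ) :
      (Int.fib k : K) + Int.fib (k + 1) * z = (Int.fib (k - 1) + Int.fib k * z) * z := by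
    have hfib := Int.fib_add_two (k - 1)
    rw [show k - 1 + 2 = k + 1 by ring, sub_add_cancel] at hfib
    rw [hfib]
    push_cast
    linear_combination -(Int.fib k : K) * hz
  induction k using Int.induction_on with
  | zero => simp
  | succ k ih => rw [zpow_add_one₀ hz₀, ih, ← step, add_sub_cancel_right]
  | pred k ih =>
    have h := step (-k - 1)
    rw [sub_add_cancel] at h
    rw [zpow_sub_one₀ hz₀, ih, h, mul_inv_cancel_right₀ hz₀]

theorem exists_zpow_mul_add_mul_eq (K : Type*) [Field K] (k p q : ℤ) :
    ∃ r s : ℤ, ∀ z : K, z ^ 2 = z + 1 → z ^ k * (p + q * z) = r + s * z := by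
  refine ⟨Int.fib (k - 1) * p + Int.fib k * q, Int.fib (k - 1) * q + Int.fib k * (p + q),
    fun z hz => ?_⟩
  rw [zpow_eq_fib_sub_one_add_fib_mul hz]
  push_cast
  linear_combination (Int.fib k * q : K) * hz

theorem abs_goldenConj_zpow (k : ℤ) : |ψ ^ k| = φ ^ (-k) := by
  rw [abs_zpow, abs_of_neg goldenConj_neg, ← inv_goldenRatio, inv_zpow']

theorem exists_goldenRatio_approx (k : ℤ) (T : ℝ) :
    ∃ p q : ℤ, (p + q * φ : ℝ) ∈ Ioc (T - φ ^ k) T ∧ |p + q * ψ| < √5 * φ ^ (-k) := by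
  obtain ⟨p, q, ⟨hlo, hhi⟩, hconj_lo, hconj_hi⟩ :=
    exists_add_mul_mem_Ioc_and_mem_Ioo (goldenConj_neg.trans goldenRatio_pos) (T * φ ^ (-k))
  obtain ⟨r, s, hrs⟩ := exists_zpow_mul_add_mul_eq ℝ k p q
  have hk : 0 < φ ^ k := zpow_pos goldenRatio_pos k
  have hT : φ ^ k * (T * φ ^ (-k)) = T := by
    rw [zpow_neg, mul_left_comm, mul_inv_cancel₀ hk.ne', mul_one]
  refine ⟨r, s, ?_, ?_⟩
  · rw [← hrs φ goldenRatio_sq]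
    constructor
    · calc T - φ ^ k = φ ^ k * (T * φ ^ (-k) - 1) := by rw [mul_sub, hT, mul_one]
        _ < _ := mul_lt_mul_of_pos_left hlo hk
    · exact (mul_le_mul_of_nonneg_left hhi hk.le).trans_eq hT
  · rw [← hrs ψ goldenConj_sq, abs_mul, abs_goldenConj_zpow, mul_comm]
    have : 1 < √5 := by rw [lt_sqrt zero_le_one]; norm_num
    gcongr
    exact abs_lt.2 ⟨by linarith, hconj_hi.trans_eq goldenRatio_sub_goldenConj⟩

theorem sqrt_five_le_goldenRatio_sq : √5 ≤ φ ^ 2 := by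
  have : √5 < 3 := by rw [sqrt_lt' (by norm_num)]; norm_num
  rw [goldenRatio_sq, goldenRatio]
  linarith

theorem exists_goldenRatio_approx_of_pos {a : ℝ} (ha : 0 < a) (T : ℝ) :
    ∃ p q : ℤ, (p + q * φ : ℝ) ∈ Ioc (T - φ / a) T ∧ |p + q * ψ| < √5 * a := by
  obtain ⟨k, hk_le, hk_lt⟩ := exists_mem_Ico_zpow (inv_pos.2 ha) one_lt_goldenRatio
  obtain ⟨p, q, ⟨hlo, hhi⟩, hconj⟩ := exists_goldenRatio_approx (k + 1) T
  have hlen : φ ^ (k + 1) ≤ φ / a := by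
    rw [zpow_add_one₀ goldenRatio_ne_zero, div_eq_inv_mul]
    exact mul_le_mul_of_nonneg_right hk_le goldenRatio_pos.le
  have hsmall : φ ^ (-(k + 1)) < a := by
    rw [zpow_neg]
    exact inv_lt_of_inv_lt₀ ha hk_lt
  refine ⟨p, q, ⟨by linarith, hhi⟩, hconj.trans ?_⟩
  gcongr

theorem model_set_star_relatively_dense_general (a : ℝ) (ha : 0 < a) (s : ℝ) :
    ∃ m n : ℤ,
      ((m : ℝ) * tau - n) / Real.sqrt 5 ∈ Set.Ioo (-a) a ∧
      s - ((n : ℝ) - m * tau') / Real.sqrt 5 ∈ Set.Icc 0 (tau ^ 3 / (5 * a)) := by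
  obtain ⟨p, q, ⟨hlo, hhi⟩, hconj⟩ := exists_goldenRatio_approx_of_pos ha (√5 * s)
  have h5 : 0 < √5 := by positivity
  have hstar : (q * tau - (p + q : ℤ)) / √5 = -(p + q * ψ) / √5 := by
    rw [tau, ← one_sub_goldenConj]; push_cast; ring
  have hpt : ((p + q : ℤ) - q * tau') / √5 = (p + q * φ) / √5 := by
    rw [tau', ← one_sub_goldenRatio]; push_cast; ring
  have hgap : φ / a / √5 ≤ tau ^ 3 / (5 * a) := by
    calc φ / a / √5 = φ * √5 / (5 * a) := by
          field_simp
          rw [sq_sqrt (by norm_num)]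
      _ ≤ φ * φ ^ 2 / (5 * a) := by gcongr; exact sqrt_five_le_goldenRatio_sq
      _ = tau ^ 3 / (5 * a) := by rw [tau]; ring
  refine ⟨q, p + q, ?_, ?_⟩
  · rw [hstar, mem_Ioo, lt_div_iff₀ h5, div_lt_iff₀ h5]
    constructor <;> linarith [abs_lt.1 hconj]
  · rw [hpt, mem_Icc, sub_nonneg, div_le_iff₀ h5]
    have hlo' : s - φ / a / √5 < (p + q * φ) / √5 := by
      rw [lt_div_iff₀ h5, sub_mul, div_mul_cancel₀ _ h5.ne']
      linarith
    constructor <;> linarith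

/-- For `0 < a < τ/√5`, one has `⋀⋆((−a,a)) + [0, τ³/(5a)] = ℝ`: for every real `s`
there exist integers `m, n` with `(mτ−n)/√5 ∈ (−a,a)` and
`s − (n−mτ′)/√5 ∈ [0, τ³/(5a)]`. -/
theorem model_set_star_relatively_dense (a : ℝ) (ha : 0 < a)
    (ha' : a < tau / Real.sqrt 5) (s : ℝ) :
    ∃ m n : ℤ,
      ((m : ℝ) * tau - n) / Real.sqrt 5 ∈ Set.Ioo (-a) a ∧
      s - ((n : ℝ) - m * tau') / Real.sqrt 5 ∈ Set.Icc 0 (tau ^ 3 / (5 * a)) :=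
  model_set_star_relatively_dense_general a ha s
end

section
/- Let a > 0 and let c : ℤ×ℤ → ℝ be a function with c(m,n) ≥ 0 for all (m,n) and c(m,n) = 0 whenever |m+nτ′| > τ. Let k be a real number of the form k = (q−pτ′)/√5 with p, q ∈ ℤ and |(pτ−q)/√5| ≤ a. Suppose I ∈ ℝ and J ∈ ℂ are such that, as N → ∞ along the positive integers, (1/(2N))·Σ_{(m,n)∈ℤ²: |m+nτ| ≤ N, |m+nτ′| ≤ τ} c(m,n) → I and (1/(2N))·Σ_{(m,n)∈ℤ²: |m+nτ| ≤ N, |m+nτ′| ≤ τ} exp(−2πi(m+nτ)k)·c(m,n) → J (both sums are over finite index sets). Then |I − J| ≤ 2πaτ·I; in particular Re J ≥ (1 − 2πaτ)·I. -/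
/-!
For `x = m + nτ` and `k = (q - pτ')/√5` one has `x * k ≡ -x⋆ * k⋆ (mod ℤ)`, where
`x⋆ = m + nτ'` and `k⋆ = (pτ - q)/√5`. Hence on the window `|x⋆| ≤ τ` every phase factor satisfies
`‖1 - exp(-2πixk)‖ ≤ 2π|x⋆||k⋆| ≤ 2πaτ`, and since `c ≥ 0` the two averaged sums differ by at most
`2πaτ` times the averaged sum of `c`. Passing to the limit gives `‖I - J‖ ≤ 2πaτ I`.
-/

open Complex
open scoped Real

theorem norm_one_sub_exp_neg_two_pi_I_mul_le (t : ℝ) (z : ℤ) :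
    ‖1 - exp (-2 * π * I * t)‖ ≤ 2 * π * |t - z| := by
  have harg : -2 * π * I * t = I * ((-(2 * π * (t - z)) : ℝ) : ℂ) + (-z : ℤ) * (2 * π * I) := by
    push_cast; ring
  rw [harg, exp_add, exp_int_mul_two_pi_mul_I, mul_one, norm_sub_rev]
  calc _ ≤ ‖-(2 * π * (t - z))‖ := Real.norm_exp_I_mul_ofReal_sub_one_le
    _ = 2 * π * |t - z| := by rw [norm_neg, Real.norm_eq_abs, abs_mul, abs_of_pos (by positivity)]

theorem mem_Icc_neg_ceil_of_abs_le {x : ℤ} {B : ℝ} (h : |(x : ℝ)| ≤ B) :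
    x ∈ Set.Icc (-⌈B⌉) ⌈B⌉ :=
  abs_le.mp (Int.cast_le.mp ((Int.cast_abs (R := ℝ) ▸ h).trans (Int.le_ceil B)))

theorem finite_setOf_abs_add_mul_le {α β : ℝ} (hαβ : α ≠ β) (N M : ℝ) :
    {r : ℤ × ℤ | |(r.1 : ℝ) + r.2 * α| ≤ N ∧ |(r.1 : ℝ) + r.2 * β| ≤ M}.Finite := by
  set B := (N + M) / |α - β|
  refine ((Set.finite_Icc (-⌈N + B * |α|⌉) ⌈N + B * |α|⌉).prod
    (Set.finite_Icc (-⌈B⌉) ⌈B⌉)).subset ?_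
  rintro ⟨m, n⟩ ⟨hα, hβ⟩
  have hn : |(n : ℝ)| ≤ B := by
    rw [le_div_iff₀ (abs_pos.mpr (sub_ne_zero.mpr hαβ)), ← abs_mul]
    calc |(n : ℝ) * (α - β)| = |(m + n * α) - (m + n * β)| := by ring_nf
      _ ≤ N + M := (abs_sub _ _).trans (add_le_add hα hβ)
  have hm : |(m : ℝ)| ≤ N + B * |α| := calc
    |(m : ℝ)| = |(m + n * α) - n * α| := by ring_nf
    _ ≤ N + |(n : ℝ)| * |α| := by grw [abs_sub, hα, abs_mul]
    _ ≤ N + B * |α| := by gcongr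
  exact ⟨mem_Icc_neg_ceil_of_abs_le hm, mem_Icc_neg_ceil_of_abs_le hn⟩

theorem norm_ofReal_mul_tsum_sub_mul_tsum_le {ι : Type*} [Finite ι] {w A : ℝ} (hw : 0 ≤ w)
    (c : ι → ℝ) (hc : ∀ i, 0 ≤ c i) (e : ι → ℂ) (he : ∀ i, ‖1 - e i‖ ≤ A) :
    ‖((w * ∑' i, c i : ℝ) : ℂ) - w * ∑' i, e i * c i‖ ≤ A * (w * ∑' i, c i) := by
  have := Fintype.ofFinite ι
  rw [tsum_fintype, tsum_fintype, ofReal_mul, ← mul_sub, norm_mul, norm_real,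
    Real.norm_of_nonneg hw, mul_left_comm]
  gcongr
  rw [ofReal_sum, ← Finset.sum_sub_distrib, Finset.mul_sum]
  refine (norm_sum_le _ _).trans (Finset.sum_le_sum fun i _ => ?_)
  rw [← one_sub_mul, norm_mul, norm_real, Real.norm_of_nonneg (hc i)]
  exact mul_le_mul_of_nonneg_right (he i) (hc i)

theorem tau_eq_goldenRatio : tau = Real.goldenRatio := rfl

theorem tau'_eq_goldenConj : tau' = Real.goldenConj := rfl

theorem tau_ne_tau' : tau ≠ tau' := by
  rw [tau_eq_goldenRatio, tau'_eq_goldenConj, ← sub_ne_zero, Real.goldenRatio_sub_goldenConj]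
  positivity

theorem add_mul_tau_mul_dual_sub_int (m n p q : ℤ) :
    (m + n * tau) * ((q - p * tau') / √5) - (m * p + n * q : ℤ)
      = -((m + n * tau') * ((p * tau - q) / √5)) := by
  rw [tau_eq_goldenRatio, tau'_eq_goldenConj, ← Real.goldenRatio_sub_goldenConj]
  have : Real.goldenRatio - Real.goldenConj ≠ 0 := sub_ne_zero.mpr tau_ne_tau'
  field_simp
  push_cast
  ring

theorem bragg_peak_estimate_fibonacci_general (a : ℝ) (c : ℤ × ℤ → ℝ)
    (hc0 : ∀ r, 0 ≤ c r)
    (p q : ℤ) (k : ℝ)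
    (hk : k = ((q : ℝ) - p * tau') / Real.sqrt 5)
    (hpq : |((p : ℝ) * tau - q) / Real.sqrt 5| ≤ a)
    (I₀ : ℝ) (J : ℂ)
    (hI : Filter.Tendsto
      (fun N : ℕ => (1 / (2 * (N : ℝ))) *
        ∑' r : {r : ℤ × ℤ //
            |(r.1 : ℝ) + r.2 * tau| ≤ N ∧ |(r.1 : ℝ) + r.2 * tau'| ≤ tau},
          c r)
      Filter.atTop (nhds I₀))
    (hJ : Filter.Tendsto
      (fun N : ℕ => (1 / (2 * (N : ℝ)) : ℂ) *
        ∑' r : {r : ℤ × ℤ //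
            |(r.1 : ℝ) + r.2 * tau| ≤ N ∧ |(r.1 : ℝ) + r.2 * tau'| ≤ tau},
          Complex.exp (-2 * Real.pi * Complex.I *
            ((((r.1.1 : ℝ) + r.1.2 * tau) * k : ℝ) : ℂ)) * (c r : ℂ))
      Filter.atTop (nhds J)) :
    ‖(I₀ : ℂ) - J‖ ≤ 2 * Real.pi * a * tau * I₀ ∧
      (1 - 2 * Real.pi * a * tau) * I₀ ≤ J.re := by
  have hphase : ∀ r : ℤ × ℤ, |(r.1 : ℝ) + r.2 * tau'| ≤ tau →
      ‖1 - exp (-2 * π * I * ((((r.1 : ℝ) + r.2 * tau) * k : ℝ) : ℂ))‖ ≤ 2 * π * a * tau := by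
    rintro ⟨m, n⟩ hx
    calc _ ≤ 2 * π * |(m + n * tau) * k - (m * p + n * q : ℤ)| :=
          norm_one_sub_exp_neg_two_pi_I_mul_le _ _
      _ = 2 * π * (|m + n * tau'| * |(p * tau - q) / √5|) := by
          rw [hk, add_mul_tau_mul_dual_sub_int, abs_neg, abs_mul]
      _ ≤ 2 * π * (tau * a) := by gcongr; exact (tau_eq_goldenRatio ▸ Real.goldenRatio_pos).le
      _ = 2 * π * a * tau := by ring
  have hdist : ‖(I₀ : ℂ) - J‖ ≤ 2 * π * a * tau * I₀ := by
    refine le_of_tendsto_of_tendsto' (hI.ofReal.sub hJ).norm (hI.const_mul _) fun N => ?_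
    have := (finite_setOf_abs_add_mul_le tau_ne_tau' N tau).to_subtype
    have key := norm_ofReal_mul_tsum_sub_mul_tsum_le
      (ι := {r : ℤ × ℤ | |(r.1 : ℝ) + r.2 * tau| ≤ N ∧ |(r.1 : ℝ) + r.2 * tau'| ≤ tau})
      (w := 1 / (2 * (N : ℝ))) (by positivity) (fun r => c r) (fun r => hc0 r) _
      (fun r => hphase r r.2.2)
    push_cast at key ⊢
    exact key
  refine ⟨hdist, ?_⟩
  have hre := (re_le_norm ((I₀ : ℂ) - J)).trans hdist
  rw [sub_re, ofReal_re] at hre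
  linarith

/-- Bragg peak estimate for subsets of the Fibonacci model set: if the autocorrelation
coefficients `c` are nonnegative and supported in `⋀([−τ,τ])`, the averaged sums
converge to `I` (at `0`) and `J` (at `k ∈ ⋀⋆([−a,a])`), then
`|I − J| ≤ 2πaτ·I`, and in particular `Re J ≥ (1 − 2πaτ)·I`. -/
theorem bragg_peak_estimate_fibonacci (a : ℝ) (ha : 0 < a)
    (c : ℤ × ℤ → ℝ)
    (hc0 : ∀ r, 0 ≤ c r)
    (hcsupp : ∀ r : ℤ × ℤ, tau < |(r.1 : ℝ) + r.2 * tau'| → c r = 0)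
    (p q : ℤ) (k : ℝ)
    (hk : k = ((q : ℝ) - p * tau') / Real.sqrt 5)
    (hpq : |((p : ℝ) * tau - q) / Real.sqrt 5| ≤ a)
    (I₀ : ℝ) (J : ℂ)
    (hI : Filter.Tendsto
      (fun N : ℕ => (1 / (2 * (N : ℝ))) *
        ∑' r : {r : ℤ × ℤ //
            |(r.1 : ℝ) + r.2 * tau| ≤ N ∧ |(r.1 : ℝ) + r.2 * tau'| ≤ tau},
          c r)
      Filter.atTop (nhds I₀))
    (hJ : Filter.Tendsto
      (fun N : ℕ => (1 / (2 * (N : ℝ)) : ℂ) *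
        ∑' r : {r : ℤ × ℤ //
            |(r.1 : ℝ) + r.2 * tau| ≤ N ∧ |(r.1 : ℝ) + r.2 * tau'| ≤ tau},
          Complex.exp (-2 * Real.pi * Complex.I *
            ((((r.1.1 : ℝ) + r.1.2 * tau) * k : ℝ) : ℂ)) * (c r : ℂ))
      Filter.atTop (nhds J)) :
    ‖(I₀ : ℂ) - J‖ ≤ 2 * Real.pi * a * tau * I₀ ∧
      (1 - 2 * Real.pi * a * tau) * I₀ ≤ J.re :=
  bragg_peak_estimate_fibonacci_general a c hc0 p q k hk hpq I₀ J hI hJ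
end

section
/- The dual Fibonacci lattice L⁰ meets every translate of the box [−1/2, 3/2] × [0, 1/10] in at most one point: for all real s, u, if (p₁,q₁) and (p₂,q₂) are pairs of integers with ((qᵢ−pᵢτ′)/√5, (pᵢτ−qᵢ)/√5) ∈ (s,u) + [−1/2,3/2]×[0,1/10] for i = 1, 2, then (p₁,q₁) = (p₂,q₂). -/
lemma dual_lattice_aux (r : ℝ) (hrl : (2.236 : ℝ) < r) (hru : r < (2.2361 : ℝ))
    (a b : ℤ) (ha : -3 < a) (ha' : a < 3)
    (hlb : -(r / 10) ≤ (a : ℝ) * (1 + r) / 2 - b)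
    (hub : (a : ℝ) * (1 + r) / 2 - b ≤ r / 10) :
    a = 0 ∧ b = 0 := by
  interval_cases a
  · exfalso
    have h1 : (-4 : ℝ) < (b : ℝ) := by push_cast at hlb hub ⊢; linarith
    have h2 : (b : ℝ) < -3 := by push_cast at hlb hub ⊢; linarith
    have h1' : (-4 : ℤ) < b := by exact_mod_cast h1
    have h2' : b < -3 := by exact_mod_cast h2
    omega
  · exfalso
    have h1 : (-2 : ℝ) < (b : ℝ) := by push_cast at hlb hub ⊢; linarith
    have h2 : (b : ℝ) < -1 := by push_cast at hlb hub ⊢; linarith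
    have h1' : (-2 : ℤ) < b := by exact_mod_cast h1
    have h2' : b < -1 := by exact_mod_cast h2
    omega
  · have h1 : (-1 : ℝ) < (b : ℝ) := by push_cast at hlb hub ⊢; linarith
    have h2 : (b : ℝ) < 1 := by push_cast at hlb hub ⊢; linarith
    have h1' : (-1 : ℤ) < b := by exact_mod_cast h1
    have h2' : b < 1 := by exact_mod_cast h2
    omega
  · exfalso
    have h1 : (1 : ℝ) < (b : ℝ) := by push_cast at hlb hub ⊢; linarith
    have h2 : (b : ℝ) < 2 := by push_cast at hlb hub ⊢; linarith
    have h1' : (1 : ℤ) < b := by exact_mod_cast h1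
    have h2' : b < 2 := by exact_mod_cast h2
    omega
  · exfalso
    have h1 : (3 : ℝ) < (b : ℝ) := by push_cast at hlb hub ⊢; linarith
    have h2 : (b : ℝ) < 4 := by push_cast at hlb hub ⊢; linarith
    have h1' : (3 : ℤ) < b := by exact_mod_cast h1
    have h2' : b < 4 := by exact_mod_cast h2
    omega

/-- The dual Fibonacci lattice meets every translate of the box
`[−1/2, 3/2] × [0, 1/10]` in at most one point. -/
theorem dual_lattice_box_uniformly_discrete (s u : ℝ) (p₁ q₁ p₂ q₂ : ℤ)
    (h1 : ((q₁ : ℝ) - p₁ * tau') / Real.sqrt 5 ∈ Set.Icc (s + -(1 / 2)) (s + 3 / 2))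
    (h1' : ((p₁ : ℝ) * tau - q₁) / Real.sqrt 5 ∈ Set.Icc u (u + 1 / 10))
    (h2 : ((q₂ : ℝ) - p₂ * tau') / Real.sqrt 5 ∈ Set.Icc (s + -(1 / 2)) (s + 3 / 2))
    (h2' : ((p₂ : ℝ) * tau - q₂) / Real.sqrt 5 ∈ Set.Icc u (u + 1 / 10)) :
    p₁ = p₂ ∧ q₁ = q₂ := by
  have hr2 : Real.sqrt 5 ^ 2 = 5 := Real.sq_sqrt (by norm_num)
  have hrpos : (0:ℝ) < Real.sqrt 5 := Real.sqrt_pos.mpr (by norm_num)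
  have hrl : (2.236 : ℝ) < Real.sqrt 5 := by nlinarith
  have hru : Real.sqrt 5 < (2.2361 : ℝ) := by nlinarith
  obtain ⟨h1a, h1b⟩ := h1
  obtain ⟨h1'a, h1'b⟩ := h1'
  obtain ⟨h2a, h2b⟩ := h2
  obtain ⟨h2'a, h2'b⟩ := h2'
  have hAdiv : (((q₁ : ℝ) - q₂) - ((p₁ : ℝ) - p₂) * tau') / Real.sqrt 5
      = ((q₁ : ℝ) - p₁ * tau') / Real.sqrt 5 - ((q₂ : ℝ) - p₂ * tau') / Real.sqrt 5 := by
    field_simp; ring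
  have hBdiv : (((p₁ : ℝ) - p₂) * tau - ((q₁ : ℝ) - q₂)) / Real.sqrt 5
      = ((p₁ : ℝ) * tau - q₁) / Real.sqrt 5 - ((p₂ : ℝ) * tau - q₂) / Real.sqrt 5 := by
    field_simp; ring
  have hA1 : (((q₁ : ℝ) - q₂) - ((p₁ : ℝ) - p₂) * tau') / Real.sqrt 5 ≤ 2 := by
    rw [hAdiv]; linarith
  have hA2 : -2 ≤ (((q₁ : ℝ) - q₂) - ((p₁ : ℝ) - p₂) * tau') / Real.sqrt 5 := by
    rw [hAdiv]; linarith
  have hB1 : (((p₁ : ℝ) - p₂) * tau - ((q₁ : ℝ) - q₂)) / Real.sqrt 5 ≤ 1 / 10 := by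
    rw [hBdiv]; linarith
  have hB2 : -(1 / 10) ≤ (((p₁ : ℝ) - p₂) * tau - ((q₁ : ℝ) - q₂)) / Real.sqrt 5 := by
    rw [hBdiv]; linarith
  have hAub : ((q₁ : ℝ) - q₂) - ((p₁ : ℝ) - p₂) * tau' ≤ 2 * Real.sqrt 5 := by
    have := mul_le_mul_of_nonneg_right hA1 hrpos.le
    rwa [div_mul_cancel₀ _ hrpos.ne'] at this
  have hAlb : -(2 * Real.sqrt 5) ≤ ((q₁ : ℝ) - q₂) - ((p₁ : ℝ) - p₂) * tau' := by
    have := mul_le_mul_of_nonneg_right hA2 hrpos.le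
    rw [div_mul_cancel₀ _ hrpos.ne'] at this; linarith
  have hBub : ((p₁ : ℝ) - p₂) * tau - ((q₁ : ℝ) - q₂) ≤ Real.sqrt 5 / 10 := by
    have := mul_le_mul_of_nonneg_right hB1 hrpos.le
    rw [div_mul_cancel₀ _ hrpos.ne'] at this; linarith
  have hBlb : -(Real.sqrt 5 / 10) ≤ ((p₁ : ℝ) - p₂) * tau - ((q₁ : ℝ) - q₂) := by
    have := mul_le_mul_of_nonneg_right hB2 hrpos.le
    rw [div_mul_cancel₀ _ hrpos.ne'] at this; linarith
  have hsum : (((q₁ : ℝ) - q₂) - ((p₁ : ℝ) - p₂) * tau')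
      + (((p₁ : ℝ) - p₂) * tau - ((q₁ : ℝ) - q₂)) = ((p₁ : ℝ) - p₂) * Real.sqrt 5 := by
    rw [tau, tau']; ring
  have hpa : -(21/10 : ℝ) ≤ ((p₁ : ℝ) - p₂) := by nlinarith
  have hpb : ((p₁ : ℝ) - p₂) ≤ (21/10 : ℝ) := by nlinarith
  have haR1 : (-3 : ℝ) < ((p₁ - p₂ : ℤ) : ℝ) := by push_cast; linarith
  have haR2 : ((p₁ - p₂ : ℤ) : ℝ) < 3 := by push_cast; linarith
  have ha1 : -3 < p₁ - p₂ := by exact_mod_cast haR1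
  have ha2 : p₁ - p₂ < 3 := by exact_mod_cast haR2
  have hlb : -(Real.sqrt 5 / 10) ≤ ((p₁ - p₂ : ℤ) : ℝ) * (1 + Real.sqrt 5) / 2 - (q₁ - q₂ : ℤ) := by
    rw [tau] at hBlb; push_cast; linarith [hBlb]
  have hub : ((p₁ - p₂ : ℤ) : ℝ) * (1 + Real.sqrt 5) / 2 - ((q₁ - q₂ : ℤ) : ℝ) ≤ Real.sqrt 5 / 10 := by
    rw [tau] at hBub; push_cast; linarith [hBub]
  obtain ⟨hA0, hB0⟩ := dual_lattice_aux (Real.sqrt 5) hrl hru (p₁ - p₂) (q₁ - q₂) ha1 ha2 hlb hub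
  exact ⟨by omega, by omega⟩
end

section
/- Let a, b > 0 be real numbers and define g : ℝ → ℝ by g(x) = sinc(ax)·sinc(bx)³, where sinc(x) = sin(x)/x for x ≠ 0 and sinc(0) = 1. Then g is Lipschitz with constant (a+3b)/2: for all real x, y, |g(x) − g(y)| ≤ ((a+3b)/2)·|x − y|. -/
noncomputable def sinc (x : ℝ) : ℝ := if x = 0 then 1 else Real.sin x / x

/-!
Since `sinc x = ∫₀¹ cos (t x) dt` and `cos` is 1-Lipschitz,
`|sinc u - sinc v| ≤ ∫₀¹ t |u - v| dt = |u - v| / 2`; also `|sinc| ≤ 1`. For functions bounded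
by `1` in norm, Lipschitz constants add under products, because
`f x g x - f y g y = f x (g x - g y) + (f x - f y) g y`. Hence `x ↦ sinc (a x) sinc (b x) ^ n`
is Lipschitz with constant `(|a| + n |b|) / 2`.
-/

open scoped NNReal

theorem sinc_eq_real_sinc : sinc = Real.sinc := rfl

namespace Real

open MeasureTheory intervalIntegral

theorem sinc_eq_integral_cos (x : ℝ) : sinc x = ∫ t in (0 : ℝ)..1, cos (t * x) := by
  rcases eq_or_ne x 0 with rfl | hx
  · simp
  · rw [integral_comp_mul_right cos hx, integral_cos, sinc_of_ne_zero hx]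
    simp [div_eq_inv_mul]

theorem abs_sinc_sub_sinc_le (u v : ℝ) : |sinc u - sinc v| ≤ |u - v| / 2 := by
  have hcos (w : ℝ) : IntervalIntegrable (fun t => cos (t * w)) volume 0 1 :=
    (by fun_prop : Continuous fun t => cos (t * w)).intervalIntegrable _ _
  calc |sinc u - sinc v| = ‖∫ t in (0 : ℝ)..1, (cos (t * u) - cos (t * v))‖ := by
        rw [sinc_eq_integral_cos, sinc_eq_integral_cos, integral_sub (hcos u) (hcos v),
          norm_eq_abs]
    _ ≤ ∫ t in (0 : ℝ)..1, t * |u - v| := by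
        refine norm_integral_le_of_norm_le zero_le_one (ae_of_all _ fun t ht => ?_) (by simp)
        calc ‖cos (t * u) - cos (t * v)‖ ≤ |t * u - t * v| := abs_cos_sub_cos_le _ _
          _ = t * |u - v| := by rw [← mul_sub, abs_mul, abs_of_pos ht.1]
    _ = |u - v| / 2 := by simp [intervalIntegral.integral_mul_const, div_eq_inv_mul]

theorem lipschitzWith_sinc : LipschitzWith (1 / 2) sinc :=
  LipschitzWith.of_dist_le_mul fun u v => by
    simpa [dist_eq, div_eq_inv_mul] using abs_sinc_sub_sinc_le u v

end Real

section
variable {α R : Type*} [PseudoMetricSpace α] [SeminormedRing R] {f g : α → R} {Kf Kg : ℝ≥0}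

theorem LipschitzWith.mul_of_norm_le_one (hf : LipschitzWith Kf f) (hg : LipschitzWith Kg g)
    (hf1 : ∀ x, ‖f x‖ ≤ 1) (hg1 : ∀ x, ‖g x‖ ≤ 1) :
    LipschitzWith (Kf + Kg) fun x => f x * g x := by
  refine LipschitzWith.of_dist_le_mul fun x y => ?_
  calc dist (f x * g x) (f y * g y) = ‖f x * (g x - g y) + (f x - f y) * g y‖ := by
        rw [dist_eq_norm]; noncomm_ring
    _ ≤ ‖f x‖ * ‖g x - g y‖ + ‖f x - f y‖ * ‖g y‖ :=
        (norm_add_le _ _).trans (add_le_add (norm_mul_le _ _) (norm_mul_le _ _))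
    _ ≤ 1 * (Kg * dist x y) + (Kf * dist x y) * 1 := by
        rw [← dist_eq_norm, ← dist_eq_norm]
        gcongr
        exacts [hf1 x, hg.dist_le_mul x y, hf.dist_le_mul x y, hg1 y]
    _ = ↑(Kf + Kg) * dist x y := by push_cast; ring

theorem LipschitzWith.pow_of_norm_le_one [NormOneClass R] (hf : LipschitzWith Kf f)
    (hf1 : ∀ x, ‖f x‖ ≤ 1) : ∀ n : ℕ, LipschitzWith (n * Kf) fun x => f x ^ n
  | 0 => by simpa using LipschitzWith.const (1 : R)
  | n + 1 => by
    simp only [pow_succ, Nat.cast_succ, add_one_mul]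
    exact (hf.pow_of_norm_le_one hf1 n).mul_of_norm_le_one hf
      (fun x => (norm_pow_le _ n).trans (pow_le_one₀ (norm_nonneg _) (hf1 x))) hf1

end

theorem Real.lipschitzWith_sinc_mul_sinc_pow (a b : ℝ) (n : ℕ) :
    LipschitzWith ((‖a‖₊ + n * ‖b‖₊) / 2) fun x => sinc (a * x) * sinc (b * x) ^ n := by
  have hscaled (c : ℝ) : LipschitzWith (‖c‖₊ / 2) fun x => sinc (c * x) := by
    rw [← one_div_mul_eq_div]
    exact lipschitzWith_sinc.comp (lipschitzWith_smul c)
  have hbound (c x : ℝ) : ‖sinc (c * x)‖ ≤ 1 := abs_sinc_le_one _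
  rw [add_div, mul_div_assoc]
  exact (hscaled a).mul_of_norm_le_one ((hscaled b).pow_of_norm_le_one (hbound b) n)
    (hbound a) fun x => by simpa using pow_le_one₀ (abs_nonneg _) (abs_sinc_le_one (b * x))

/-- For `a, b > 0`, the function `g(x) = sinc(ax)·sinc(bx)³` is Lipschitz with
constant `(a+3b)/2`. -/
theorem sinc_product_lipschitz (a b : ℝ) (ha : 0 < a) (hb : 0 < b) (x y : ℝ) :
    |sinc (a * x) * (sinc (b * x)) ^ 3 - sinc (a * y) * (sinc (b * y)) ^ 3|
      ≤ ((a + 3 * b) / 2) * |x - y| := by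
  rw [sinc_eq_real_sinc]
  simpa [Real.dist_eq, abs_of_pos ha, abs_of_pos hb] using
    (Real.lipschitzWith_sinc_mul_sinc_pow a b 3).dist_le_mul x y
end

section
/- Let τ = (1+√5)/2, τ′ = (1−√5)/2, and define g : ℝ → ℝ by g(x) = sinc(2π(τ+1)x)·sinc((2π/3)x)³, where sinc(x) = sin(x)/x for x ≠ 0 and sinc(0) = 1. Let 0 < α < 1/81 and let p, q ∈ ℤ be such that t⋆ := (pτ−q)/√5 satisfies |t⋆| ≤ α. Then for every real s, the sum over all pairs (m,n) ∈ ℤ² with (n−mτ′)/√5 ∈ [s−1/2, s+3/2] of |g((mτ−n)/√5) − g((mτ−n)/√5 − t⋆)| converges, and ((3+√5)/√5) · Σ_{(m,n)∈ℤ²: (n−mτ′)/√5 ∈ [s−1/2, s+3/2]} |g((mτ−n)/√5) − g((mτ−n)/√5 − t⋆)| < 2507·α^{3/4}. -/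
/-- The function `g(x) = sinc(2π(τ+1)x)·sinc((2π/3)x)³`. -/
noncomputable def g (x : ℝ) : ℝ :=
  sinc (2 * Real.pi * (tau + 1) * x) * (sinc (2 * Real.pi / 3 * x)) ^ 3

/-! The point `(y, y⋆)` of `L⁰` indexed by `(m, n)` has `y⋆ = m - y`, so on the strip
`y ∈ [s - 1/2, s + 3/2]` each column `m` holds at most five lattice points, all with
`|y⋆| ≥ |m - k| - 2` for a fixed integer `k`. Each summand is at most `23 α`, because `g` is
`23`-Lipschitz, and at most `≈ |m - k|⁻⁴`, because `|g x| ≤ 1 / (140 x⁴)`. Using the first bound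
on the `≈ α^{-1/4}` columns nearest to `k` and the second on all others balances the two
contributions at `O(α^{3/4})`. -/

open Finset

theorem Finset.sum_comp_le_mul_sum_image {ι κ R : Type*} [DecidableEq κ] [Semiring R]
    [PartialOrder R] [IsOrderedRing R] (S : Finset ι) (π : ι → κ) {φ : κ → R}
    (hφ : ∀ k, 0 ≤ φ k) {N : ℕ} (hN : ∀ k, #{i ∈ S | π i = k} ≤ N) :
    ∑ i ∈ S, φ (π i) ≤ N * ∑ k ∈ S.image π, φ k := by
  rw [sum_comp, mul_sum]
  gcongr with k
  rw [nsmul_eq_mul]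
  gcongr
  · exact hφ k
  · exact_mod_cast hN k

theorem Int.card_le_of_cast_mem_Ico {S : Finset ℤ} {a : ℝ} {k : ℕ}
    (h : ∀ n ∈ S, (n : ℝ) ∈ Set.Ico a (a + k)) : #S ≤ k := by
  calc #S ≤ #(Ico ⌈a⌉ (⌈a⌉ + k)) := card_le_card fun n hn => by
          obtain ⟨h₁, h₂⟩ := h n hn
          have : (n : ℝ) < ((⌈a⌉ + k : ℤ) : ℝ) := by push_cast; linarith [Int.le_ceil a]
          exact mem_Ico.2 ⟨Int.ceil_le.2 h₁, by exact_mod_cast this⟩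
    _ = k := by simp

theorem Int.card_filter_natAbs_sub_eq_le_two (S : Finset ℤ) (k : ℤ) (d : ℕ) :
    #{m ∈ S | (m - k).natAbs = d} ≤ 2 := by
  calc #{m ∈ S | (m - k).natAbs = d} ≤ #({k + d, k - d} : Finset ℤ) := card_le_card fun m hm => by
          have := (mem_filter.1 hm).2
          simp only [mem_insert, mem_singleton]
          omega
    _ ≤ 2 := card_le_two

theorem sum_inv_pow_four_le {K : ℕ} (hK : 0 < K) (S : Finset ℕ) (hS : ∀ i ∈ S, K ≤ i) :
    ∑ i ∈ S, ((i : ℝ) ^ 4)⁻¹ ≤ 2 / (K : ℝ) ^ 3 := by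
  have hK' : (0 : ℝ) < K := by exact_mod_cast hK
  calc ∑ i ∈ S, ((i : ℝ) ^ 4)⁻¹ ≤ ∑ i ∈ S, ((K : ℝ) ^ 2)⁻¹ * ((i : ℝ) ^ 2)⁻¹ := by
        gcongr with i hi
        have hi : (K : ℝ) ≤ i := by exact_mod_cast hS i hi
        have : (0 : ℝ) < i := hK'.trans_le hi
        rw [← mul_inv, show (i : ℝ) ^ 4 = i ^ 2 * i ^ 2 by ring]
        gcongr
    _ ≤ ((K : ℝ) ^ 2)⁻¹ * ∑ i ∈ Ioo (K - 1) (S.sup id + 1), ((i : ℝ) ^ 2)⁻¹ := by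
        rw [← mul_sum]
        gcongr
        intro i hi
        have := hS i hi
        have := le_sup (f := id) hi
        simp only [mem_Ioo, id] at *
        omega
    _ ≤ ((K : ℝ) ^ 2)⁻¹ * (2 / (((K - 1 : ℕ) : ℝ) + 1)) := by gcongr; exact sum_Ioo_inv_sq_le _ _
    _ = 2 / (K : ℝ) ^ 3 := by
        rw [Nat.cast_sub hK, Nat.cast_one, sub_add_cancel]
        field_simp

theorem abs_mul_sub_mul_le {a b c d : ℝ} (ha : |a| ≤ 1) (hd : |d| ≤ 1) :
    |a * b - c * d| ≤ |b - d| + |a - c| := by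
  calc |a * b - c * d| = |a * (b - d) + (a - c) * d| := by ring_nf
    _ ≤ |a| * |b - d| + |a - c| * |d| := by rw [← abs_mul, ← abs_mul]; exact abs_add_le _ _
    _ ≤ |b - d| + |a - c| := by
        gcongr
        · exact mul_le_of_le_one_left (abs_nonneg _) ha
        · exact mul_le_of_le_one_right (abs_nonneg _) hd

theorem abs_pow_sub_pow_le_of_abs_le_one {u v : ℝ} (hu : |u| ≤ 1) (hv : |v| ≤ 1) (n : ℕ) :
    |u ^ n - v ^ n| ≤ n * |u - v| := by
  have hmax : max |u| |v| ^ (n - 1) ≤ 1 := pow_le_one₀ (by positivity) (max_le hu hv)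
  calc |u ^ n - v ^ n| ≤ |u - v| * n * max |u| |v| ^ (n - 1) := abs_pow_sub_pow_le u v n
    _ ≤ n * |u - v| := by rw [mul_comm |u - v|]; exact mul_le_of_le_one_right (by positivity) hmax

theorem Real.sinc_eq_integral_cos_s17 (x : ℝ) :
    Real.sinc x = ∫ t in (0 : ℝ)..1, Real.cos (x * t) := by
  rcases eq_or_ne x 0 with rfl | hx
  · simp
  · rw [Real.sinc_of_ne_zero hx, intervalIntegral.integral_comp_mul_left Real.cos hx]
    simp [div_eq_inv_mul]

theorem Real.abs_sinc_sub_sinc_le_s17 (x y : ℝ) : |Real.sinc x - Real.sinc y| ≤ |x - y| := by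
  have hint : ∀ c : ℝ, IntervalIntegrable (fun t => Real.cos (c * t)) MeasureTheory.volume 0 1 :=
    fun c => (by fun_prop : Continuous fun t => Real.cos (c * t)).intervalIntegrable _ _
  rw [Real.sinc_eq_integral_cos_s17, Real.sinc_eq_integral_cos_s17,
    ← intervalIntegral.integral_sub (hint x) (hint y)]
  suffices h : ∀ t ∈ Set.uIoc (0 : ℝ) 1, ‖Real.cos (x * t) - Real.cos (y * t)‖ ≤ |x - y| by
    simpa using intervalIntegral.norm_integral_le_of_norm_le_const h
  intro t ht
  rw [Set.uIoc_of_le zero_le_one] at ht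
  calc |Real.cos (x * t) - Real.cos (y * t)| ≤ |x * t - y * t| := Real.abs_cos_sub_cos_le _ _
    _ = |x - y| * t := by rw [← sub_mul, abs_mul, abs_of_pos ht.1]
    _ ≤ |x - y| := mul_le_of_le_one_right (abs_nonneg _) ht.2

theorem Real.abs_sinc_le_inv_abs {x : ℝ} (hx : x ≠ 0) : |Real.sinc x| ≤ |x|⁻¹ := by
  rw [Real.sinc_of_ne_zero hx, abs_div, div_eq_mul_inv]
  exact mul_le_of_le_one_left (by positivity) (Real.abs_sin_le_one x)

theorem g_eq_real_sinc (x : ℝ) :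
    g x = Real.sinc (Real.pi * (3 + Real.sqrt 5) * x) * Real.sinc (2 * Real.pi / 3 * x) ^ 3 := by
  have : 2 * Real.pi * (tau + 1) = Real.pi * (3 + Real.sqrt 5) := by unfold tau; ring
  rw [g, this]
  rfl

theorem abs_g_sub_g_le (x y : ℝ) : |g x - g y| ≤ 23 * |x - y| := by
  set a := Real.pi * (3 + Real.sqrt 5)
  set b := 2 * Real.pi / 3
  have ha : 0 < a := by positivity
  have hb : 0 < b := by positivity
  have hsinc : ∀ c z w : ℝ, |Real.sinc (c * z) - Real.sinc (c * w)| ≤ |c| * |z - w| := fun c z w =>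
    (Real.abs_sinc_sub_sinc_le_s17 _ _).trans_eq (by rw [← mul_sub, abs_mul])
  rw [g_eq_real_sinc, g_eq_real_sinc]
  calc _
      ≤ |Real.sinc (b * x) ^ 3 - Real.sinc (b * y) ^ 3| + |Real.sinc (a * x) - Real.sinc (a * y)| :=
        abs_mul_sub_mul_le (Real.abs_sinc_le_one _)
          (by rw [abs_pow]; exact pow_le_one₀ (abs_nonneg _) (Real.abs_sinc_le_one _))
    _ ≤ 3 * (b * |x - y|) + a * |x - y| := by
        gcongr
        · refine (abs_pow_sub_pow_le_of_abs_le_one (Real.abs_sinc_le_one _)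
            (Real.abs_sinc_le_one _) 3).trans ?_
          grw [hsinc, abs_of_pos hb, Nat.cast_ofNat]
        · grw [hsinc, abs_of_pos ha]
    _ ≤ 23 * |x - y| := by
        have h5 : Real.sqrt 5 ≤ 2.25 := Real.sqrt_le_iff.mpr ⟨by norm_num, by norm_num⟩
        have : 3 * b + a ≤ 23 := by simp only [a, b]; nlinarith [Real.pi_lt_d2, Real.pi_pos]
        nlinarith [abs_nonneg (x - y)]

theorem abs_g_le_of_le_abs {r z : ℝ} (hr : 0 < r) (hrz : r ≤ |z|) :
    |g z| ≤ 1 / (140 * r ^ 4) := by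
  set a := Real.pi * (3 + Real.sqrt 5)
  set b := 2 * Real.pi / 3
  have hz : 0 < |z| := hr.trans_le hrz
  have ha : 0 < a := by positivity
  have hb : 0 < b := by positivity
  have hab : 140 ≤ a * b ^ 3 := by
    simp only [a, b]
    have h5 : 2 ≤ Real.sqrt 5 := Real.le_sqrt_of_sq_le (by norm_num)
    have hpi : (3.14 : ℝ) ^ 4 ≤ Real.pi ^ 4 := by gcongr; exact Real.pi_gt_d2.le
    nlinarith
  have hsinc : ∀ c > 0, |Real.sinc (c * z)| ≤ (c * |z|)⁻¹ := fun c hc => by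
    simpa [abs_mul, abs_of_pos hc] using
      Real.abs_sinc_le_inv_abs (mul_ne_zero hc.ne' (abs_pos.mp hz))
  calc |g z| = |Real.sinc (a * z)| * |Real.sinc (b * z)| ^ 3 := by
        rw [g_eq_real_sinc, abs_mul, abs_pow]
    _ ≤ (a * |z|)⁻¹ * ((b * |z|)⁻¹) ^ 3 := by gcongr <;> exact hsinc _ ‹_›
    _ = 1 / (a * b ^ 3 * |z| ^ 4) := by field_simp
    _ ≤ 1 / (140 * r ^ 4) := by gcongr

theorem abs_g_sub_g_le_of_le_abs {r x t : ℝ} (hr : 0 < r) (hx : r + |t| ≤ |x|) :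
    |g x - g (x - t)| ≤ 1 / (70 * r ^ 4) := by
  have h₁ := abs_g_le_of_le_abs hr (by linarith [abs_nonneg t] : r ≤ |x|)
  have h₂ := abs_g_le_of_le_abs hr (by linarith [abs_sub_abs_le_abs_sub x t] : r ≤ |x - t|)
  calc |g x - g (x - t)| ≤ |g x| + |g (x - t)| := abs_sub _ _
    _ ≤ 1 / (140 * r ^ 4) + 1 / (140 * r ^ 4) := add_le_add h₁ h₂
    _ = 1 / (70 * r ^ 4) := by ring

noncomputable def gShiftMajorant (α : ℝ) (M d : ℕ) : ℝ :=
  if d ≤ M then 23 * α else 8 / (35 * (d : ℝ) ^ 4)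

theorem gShiftMajorant_of_le {α : ℝ} {M d : ℕ} (h : d ≤ M) : gShiftMajorant α M d = 23 * α :=
  if_pos h

theorem gShiftMajorant_of_lt {α : ℝ} {M d : ℕ} (h : M < d) :
    gShiftMajorant α M d = 8 / (35 * (d : ℝ) ^ 4) :=
  if_neg h.not_ge

theorem gShiftMajorant_nonneg {α : ℝ} (hα : 0 ≤ α) (M d : ℕ) : 0 ≤ gShiftMajorant α M d := by
  unfold gShiftMajorant
  split_ifs <;> positivity

theorem abs_g_sub_g_le_gShiftMajorant {x t α : ℝ} {M d : ℕ} (htα : |t| ≤ α) (hα : α ≤ 1)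
    (hM : 5 ≤ M) (hx : (d : ℝ) - 2 ≤ |x|) : |g x - g (x - t)| ≤ gShiftMajorant α M d := by
  rcases le_or_gt d M with hd | hd
  · rw [gShiftMajorant_of_le hd]
    calc |g x - g (x - t)| ≤ 23 * |x - (x - t)| := abs_g_sub_g_le _ _
      _ ≤ 23 * α := by rw [sub_sub_cancel]; linarith
  · rw [gShiftMajorant_of_lt hd]
    have hd : (6 : ℝ) ≤ d := by exact_mod_cast (show 6 ≤ d by omega)
    calc |g x - g (x - t)| ≤ 1 / (70 * ((d : ℝ) / 2) ^ 4) :=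
          abs_g_sub_g_le_of_le_abs (by positivity) (by linarith)
      _ = 8 / (35 * (d : ℝ) ^ 4) := by ring

theorem sum_gShiftMajorant_le {α : ℝ} (hα : 0 ≤ α) (M : ℕ) (S : Finset ℕ) :
    ∑ d ∈ S, gShiftMajorant α M d ≤ 23 * α * (M + 1) + 16 / (35 * ((M : ℝ) + 1) ^ 3) := by
  rw [← sum_filter_add_sum_filter_not S (· ≤ M)]
  gcongr
  · calc ∑ d ∈ S with d ≤ M, gShiftMajorant α M d = #{d ∈ S | d ≤ M} * (23 * α) := by
          rw [sum_congr rfl fun d hd => gShiftMajorant_of_le (mem_filter.1 hd).2, sum_const,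
            nsmul_eq_mul]
      _ ≤ #(range (M + 1)) * (23 * α) := by
          gcongr
          exact fun d hd => mem_range_succ_iff.2 (mem_filter.1 hd).2
      _ = 23 * α * (M + 1) := by rw [card_range]; push_cast; ring
  · calc ∑ d ∈ S with ¬d ≤ M, gShiftMajorant α M d
          = 8 / 35 * ∑ d ∈ S with ¬d ≤ M, ((d : ℝ) ^ 4)⁻¹ := by
          rw [mul_sum]
          refine sum_congr rfl fun d hd => ?_
          rw [gShiftMajorant_of_lt (not_le.1 (mem_filter.1 hd).2)]
          ring
      _ ≤ 8 / 35 * (2 / ((M + 1 : ℕ) : ℝ) ^ 3) := by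
          gcongr
          exact sum_inv_pow_four_le M.succ_pos _ fun d hd => by
            have := (mem_filter.1 hd).2
            omega
      _ = 16 / (35 * ((M : ℝ) + 1) ^ 3) := by push_cast; field_simp; ring

/-- `(dualY r, dualYStar r)` is the point of `L⁰` indexed by `r = (m, n)`. -/
noncomputable def dualY (r : ℤ × ℤ) : ℝ := ((r.2 : ℝ) - r.1 * tau') / Real.sqrt 5

noncomputable def dualYStar (r : ℤ × ℤ) : ℝ := ((r.1 : ℝ) * tau - r.2) / Real.sqrt 5

theorem dualYStar_eq (r : ℤ × ℤ) : dualYStar r = r.1 - dualY r := by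
  have : Real.sqrt 5 ≠ 0 := by positivity
  unfold dualYStar dualY tau tau'
  field_simp
  ring

theorem card_filter_fst_eq_le_five {a b : ℝ} (hab : b ≤ a + 2)
    (S : Finset {r : ℤ × ℤ // dualY r ∈ Set.Icc a b}) (m : ℤ) : #{r ∈ S | r.1.1 = m} ≤ 5 := by
  have h5 : 0 < Real.sqrt 5 := by positivity
  have h5' : Real.sqrt 5 < 5 / 2 := Real.sqrt_lt' (by norm_num) |>.2 (by norm_num)
  rw [← card_image_of_injOn (f := fun r => r.1.2) fun r hr r' hr' h => by
    simp only [coe_filter, Set.mem_ofPred_eq] at hr hr'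
    exact Subtype.ext (Prod.ext (hr.2.trans hr'.2.symm) h)]
  -- in column `m`, `n` ranges over an interval of length `√5 (b - a) ≤ 2√5 < 5`
  refine Int.card_le_of_cast_mem_Ico (a := Real.sqrt 5 * a + m * tau') fun n hn => ?_
  obtain ⟨r, hr, rfl⟩ := mem_image.1 hn
  obtain ⟨h₁, h₂⟩ := r.2
  simp only [dualY, (mem_filter.1 hr).2] at h₁ h₂
  rw [le_div_iff₀ h5] at h₁
  rw [div_le_iff₀ h5] at h₂
  constructor <;> push_cast <;> nlinarith

theorem sum_abs_g_sub_g_le {a b t α : ℝ} {M : ℕ} (hab : b ≤ a + 2) (htα : |t| ≤ α) (hα : α ≤ 1)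
    (hM : 5 ≤ M) (S : Finset {r : ℤ × ℤ // dualY r ∈ Set.Icc a b}) :
    ∑ r ∈ S, |g (dualYStar r) - g (dualYStar r - t)| ≤
      10 * (23 * α * (M + 1) + 16 / (35 * ((M : ℝ) + 1) ^ 3)) := by
  classical
  set k : ℤ := ⌈a⌉
  have hα₀ : 0 ≤ α := (abs_nonneg t).trans htα
  have hpt (r : {r : ℤ × ℤ // dualY r ∈ Set.Icc a b}) :
      |g (dualYStar r) - g (dualYStar r - t)| ≤ gShiftMajorant α M (r.1.1 - k).natAbs := by
    refine abs_g_sub_g_le_gShiftMajorant htα hα hM ?_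
    obtain ⟨h₁, h₂⟩ := r.2
    have hy : |dualY r - k| ≤ 2 := abs_le.2 ⟨by linarith [Int.ceil_lt_add_one a], by
      linarith [Int.le_ceil a]⟩
    rw [dualYStar_eq, Nat.cast_natAbs, Int.cast_abs, Int.cast_sub]
    have := abs_sub_abs_le_abs_sub ((r.1.1 : ℝ) - k) (dualY r - k)
    rw [sub_sub_sub_cancel_right] at this
    linarith
  calc ∑ r ∈ S, |g (dualYStar r) - g (dualYStar r - t)|
      ≤ ∑ r ∈ S, gShiftMajorant α M (r.1.1 - k).natAbs := sum_le_sum fun r _ => hpt r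
    _ ≤ 5 * ∑ m ∈ S.image (·.1.1), gShiftMajorant α M (m - k).natAbs :=
        sum_comp_le_mul_sum_image S (·.1.1) (φ := fun m => gShiftMajorant α M (m - k).natAbs)
          (fun _ => gShiftMajorant_nonneg hα₀ _ _)
          (card_filter_fst_eq_le_five hab S)
    _ ≤ 5 * (2 * ∑ d ∈ (S.image (·.1.1)).image (fun m => (m - k).natAbs),
          gShiftMajorant α M d) := by
        gcongr
        exact sum_comp_le_mul_sum_image _ _ (gShiftMajorant_nonneg hα₀ _)
          (Int.card_filter_natAbs_sub_eq_le_two _ k)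
    _ ≤ 5 * (2 * (23 * α * (M + 1) + 16 / (35 * ((M : ℝ) + 1) ^ 3))) := by
        gcongr
        exact sum_gShiftMajorant_le hα₀ M _
    _ = 10 * (23 * α * (M + 1) + 16 / (35 * ((M : ℝ) + 1) ^ 3)) := by ring

theorem exists_cutoff_lt {α : ℝ} (hα₀ : 0 < α) (hα₁ : α < 1 / 81) :
    ∃ M : ℕ, 5 ≤ M ∧
      25 * (23 * α * (M + 1) + 16 / (35 * ((M : ℝ) + 1) ^ 3)) < 2507 * α ^ ((3 : ℝ) / 4) := by
  set β := α ^ ((1 : ℝ) / 4)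
  have hβ₀ : 0 < β := Real.rpow_pos_of_pos hα₀ _
  have hβ3 : β ^ 3 = α ^ ((3 : ℝ) / 4) := by
    rw [← Real.rpow_natCast, ← Real.rpow_mul hα₀.le]; norm_num
  have hβ4 : β ^ 4 = α := by rw [← Real.rpow_natCast, ← Real.rpow_mul hα₀.le]; norm_num
  have hβ_lt : β < 1 / 3 := by
    by_contra! h
    nlinarith [pow_le_pow_left₀ (by norm_num) h 4]
  refine ⟨⌈β⁻¹⌉₊ + 1, ?_, ?_⟩
  · have : 3 < ⌈β⁻¹⌉₊ := Nat.lt_ceil.2 (by rw [lt_inv_comm₀ (by norm_num) hβ₀]; linarith)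
    omega
  · set N : ℝ := ((⌈β⁻¹⌉₊ + 1 : ℕ) : ℝ) + 1
    have hN₁ : β⁻¹ ≤ N := by have := Nat.le_ceil β⁻¹; push_cast [N]; linarith
    have hN₂ : N ≤ β⁻¹ + 3 := by
      have := Nat.ceil_lt_add_one (inv_nonneg.2 hβ₀.le); push_cast [N]; linarith
    have hnear : 23 * α * N ≤ 46 * β ^ 3 := by
      rw [← hβ4]
      calc 23 * β ^ 4 * N ≤ 23 * β ^ 4 * (β⁻¹ + 3) := by gcongr
        _ = 23 * β ^ 3 + 69 * β ^ 4 := by field_simp; ring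
        _ ≤ 46 * β ^ 3 := by nlinarith [pow_pos hβ₀ 3]
    have hfar : 16 / (35 * N ^ 3) ≤ β ^ 3 := by
      rw [div_le_iff₀ (by positivity)]
      have : 1 ≤ β * N := by rwa [← inv_le_iff_one_le_mul₀' hβ₀]
      nlinarith [pow_le_pow_left₀ zero_le_one this 3, mul_pow β N 3, pow_pos hβ₀ 3]
    rw [← hβ3]
    push_cast [N] at hnear hfar ⊢
    nlinarith [pow_pos hβ₀ 3]

theorem ping_pong_fourier_norm_almost_period_general (α : ℝ) (hα0 : 0 < α) (hα1 : α < 1 / 81)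
    (tstar : ℝ) (htα : |tstar| ≤ α) (s : ℝ) :
    Summable (fun r : {r : ℤ × ℤ //
        ((r.2 : ℝ) - r.1 * tau') / Real.sqrt 5 ∈ Set.Icc (s - 1 / 2) (s + 3 / 2)} =>
      |g (((r.1.1 : ℝ) * tau - r.1.2) / Real.sqrt 5) -
        g (((r.1.1 : ℝ) * tau - r.1.2) / Real.sqrt 5 - tstar)|) ∧
    (3 + Real.sqrt 5) / Real.sqrt 5 *
      ∑' r : {r : ℤ × ℤ //
          ((r.2 : ℝ) - r.1 * tau') / Real.sqrt 5 ∈ Set.Icc (s - 1 / 2) (s + 3 / 2)},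
        |g (((r.1.1 : ℝ) * tau - r.1.2) / Real.sqrt 5) -
          g (((r.1.1 : ℝ) * tau - r.1.2) / Real.sqrt 5 - tstar)|
      < 2507 * α ^ ((3 : ℝ) / 4) := by
  obtain ⟨M, hM, hM_lt⟩ := exists_cutoff_lt hα0 hα1
  have hsum := sum_abs_g_sub_g_le (a := s - 1 / 2) (b := s + 3 / 2) (by linarith) htα
    (by linarith) hM
  have hcoeff : (3 + Real.sqrt 5) / Real.sqrt 5 ≤ 5 / 2 := by
    have : 2 ≤ Real.sqrt 5 := Real.le_sqrt_of_sq_le (by norm_num)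
    rw [div_le_iff₀ (by positivity)]
    linarith
  refine ⟨summable_of_sum_le (fun _ => abs_nonneg _) hsum, ?_⟩
  calc _ ≤ 5 / 2 * (10 * (23 * α * (M + 1) + 16 / (35 * ((M : ℝ) + 1) ^ 3))) :=
        mul_le_mul hcoeff (Real.tsum_le_of_sum_le (fun _ => abs_nonneg _) hsum)
          (tsum_nonneg fun _ => abs_nonneg _) (by norm_num)
    _ < 2507 * α ^ ((3 : ℝ) / 4) := by linarith

/-- Norm almost periodicity of the Fourier transform of the ping-pong measure for
Fibonacci: for `0 < α < 1/81` and `t⋆ = (pτ−q)/√5` with `|t⋆| ≤ α`, for every real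
`s` the sum over the pairs `(m,n) ∈ ℤ²` with `(n−mτ′)/√5 ∈ [s−1/2, s+3/2]` of
`|g((mτ−n)/√5) − g((mτ−n)/√5 − t⋆)|` converges, and
`((3+√5)/√5)` times this sum is `< 2507·α^{3/4}`. -/
theorem ping_pong_fourier_norm_almost_period (α : ℝ) (hα0 : 0 < α) (hα1 : α < 1 / 81)
    (p q : ℤ) (tstar : ℝ) (ht : tstar = ((p : ℝ) * tau - q) / Real.sqrt 5)
    (htα : |tstar| ≤ α) (s : ℝ) :
    Summable (fun r : {r : ℤ × ℤ //
        ((r.2 : ℝ) - r.1 * tau') / Real.sqrt 5 ∈ Set.Icc (s - 1 / 2) (s + 3 / 2)} =>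
      |g (((r.1.1 : ℝ) * tau - r.1.2) / Real.sqrt 5) -
        g (((r.1.1 : ℝ) * tau - r.1.2) / Real.sqrt 5 - tstar)|) ∧
    (3 + Real.sqrt 5) / Real.sqrt 5 *
      ∑' r : {r : ℤ × ℤ //
          ((r.2 : ℝ) - r.1 * tau') / Real.sqrt 5 ∈ Set.Icc (s - 1 / 2) (s + 3 / 2)},
        |g (((r.1.1 : ℝ) * tau - r.1.2) / Real.sqrt 5) -
          g (((r.1.1 : ℝ) * tau - r.1.2) / Real.sqrt 5 - tstar)|
      < 2507 * α ^ ((3 : ℝ) / 4) :=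
  ping_pong_fourier_norm_almost_period_general α hα0 hα1 tstar htα s
end
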